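/- arXiv:2104.13244 — 3 statements merged into one kernel-verified Lean document; each statement's English description precedes it below -/
import Mathlib

section
/- Let x ∈ ℝ^n be a vector with ‖x‖_0 = δ nonzero entries, and let y ∈ {0,1}^n satisfy x_i y_i = 0 for all i and Σ_i y_i ≥ n - s, where δ ≤ s. Then for every ŷ ∈ {0,1}^n with Σ_i ŷ_i = n - s and x_i ŷ_i = 0 for all i, we have d_H(y, ŷ) ≤ 2(s - δ). -/
/-!
Let `S`, `T` be the supports of `y` and `yhat`. Both avoid the support of `x`, so they lie in a
set `U` of size `n - δ`; moreover `|T| = n - s ≤ |S|`. Hence `|S \ T| ≤ |U| - |T| = s - δ` and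
`|T \ S| ≤ |U| - |S| ≤ s - δ`, and for binary vectors the Hamming distance is `|S ∆ T|`.
-/

open Finset
open scoped symmDiff

theorem Finset.card_symmDiff_le_two_mul_card_sub {α : Type*} [DecidableEq α] {U S T : Finset α}
    (hS : S ⊆ U) (hT : T ⊆ U) (hTS : #T ≤ #S) :
    #(S ∆ T) ≤ 2 * (#U - #T) := by
  have hSdiff : #(S \ T) ≤ #U - #T := by
    rw [← card_sdiff_of_subset hT]
    exact card_le_card (sdiff_subset_sdiff hS le_rfl)
  have hTdiff : #(T \ S) ≤ #U - #S := by
    rw [← card_sdiff_of_subset hS]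
    exact card_le_card (sdiff_subset_sdiff hT le_rfl)
  have hSU := card_le_card hS
  calc #(S ∆ T) ≤ #(S \ T) + #(T \ S) := card_union_le _ _
    _ ≤ 2 * (#U - #T) := by omega

def IsBinary {ι R : Type*} [Zero R] [One R] (z : ι → R) : Prop :=
  ∀ i, z i = 0 ∨ z i = 1

namespace IsBinary

variable {ι R : Type*} [Fintype ι] [DecidableEq R]

theorem sum_eq_card [AddCommMonoidWithOne R] {z : ι → R} (hz : IsBinary z) :
    ∑ i, z i = #{i | z i = 1} := by
  rw [← sum_boole]
  refine sum_congr rfl fun i _ => ?_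
  rcases hz i with h | h <;> simp [h]

theorem filter_ne_eq_symmDiff [DecidableEq ι] [Zero R] [One R] [NeZero (1 : R)] {z w : ι → R}
    (hz : IsBinary z) (hw : IsBinary w) :
    ({i | z i ≠ w i} : Finset ι) = ({i | z i = 1} : Finset ι) ∆ ({i | w i = 1} : Finset ι) := by
  ext i
  rcases hz i with h | h <;> rcases hw i with h' | h' <;> simp [h, h', Finset.mem_symmDiff]

end IsBinary

theorem filter_eq_one_subset_filter_eq_zero {ι R : Type*} [Fintype ι] [MulZeroOneClass R]
    [DecidableEq R] {x z : ι → R} (hxz : ∀ i, x i * z i = 0) :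
    ({i | z i = 1} : Finset ι) ⊆ ({i | x i = 0} : Finset ι) := by
  intro i hi
  simp only [mem_filter, mem_univ, true_and] at hi ⊢
  simpa [hi] using hxz i

theorem stmt_2_general (n δ s : ℕ)
    (x y yhat : Fin n → ℝ)
    (hδ : {i | x i ≠ 0}.ncard = δ)
    (hy : ∀ i, y i = 0 ∨ y i = 1)
    (hxy : ∀ i, x i * y i = 0)
    (hysum : ((n : ℝ) - s) ≤ ∑ i, y i)
    (hyhat : ∀ i, yhat i = 0 ∨ yhat i = 1)
    (hyhatsum : ∑ i, yhat i = (n : ℝ) - s)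
    (hxyhat : ∀ i, x i * yhat i = 0) :
    {i | y i ≠ yhat i}.ncard ≤ 2 * (s - δ) := by
  set U : Finset (Fin n) := {i | x i = 0}
  set S : Finset (Fin n) := {i | y i = 1}
  set T : Finset (Fin n) := {i | yhat i = 1}
  have hU : #U + δ = n := by
    have hA : #({i | x i ≠ 0} : Finset (Fin n)) = δ := by
      rw [← hδ, ← Set.ncard_coe_finset]; simp
    simpa [hA] using card_filter_add_card_filter_not (s := univ) fun i : Fin n => x i = 0
  have hS : n ≤ #S + s := by
    rw [IsBinary.sum_eq_card hy] at hysum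
    exact_mod_cast (by linarith : (n : ℝ) ≤ (#S : ℕ) + s)
  have hT : #T + s = n := by
    rw [IsBinary.sum_eq_card hyhat] at hyhatsum
    exact_mod_cast (by linarith : ((#T : ℕ) : ℝ) + s = n)
  have hSU : S ⊆ U := filter_eq_one_subset_filter_eq_zero hxy
  have hTU : T ⊆ U := filter_eq_one_subset_filter_eq_zero hxyhat
  have hD : {i | y i ≠ yhat i}.ncard = #(S ∆ T) := by
    rw [← IsBinary.filter_ne_eq_symmDiff hy hyhat, ← Set.ncard_coe_finset]; simp
  have hST := card_symmDiff_le_two_mul_card_sub hSU hTU (by omega)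
  omega

/-- If `‖x‖₀ = δ ≤ s`, `y` is binary with `xᵢyᵢ = 0` and `∑ yᵢ ≥ n - s`, then for any
binary `yhat` with `∑ yhatᵢ = n - s` and `xᵢyhatᵢ = 0`, the Hamming distance satisfies
`d_H(y, yhat) ≤ 2(s - δ)`. -/
theorem stmt_2 (n δ s : ℕ) (hsn : s < n) (hδs : δ ≤ s)
    (x y yhat : Fin n → ℝ)
    (hδ : {i | x i ≠ 0}.ncard = δ)
    (hy : ∀ i, y i = 0 ∨ y i = 1)
    (hxy : ∀ i, x i * y i = 0)
    (hysum : ((n : ℝ) - s) ≤ ∑ i, y i)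
    (hyhat : ∀ i, yhat i = 0 ∨ yhat i = 1)
    (hyhatsum : ∑ i, yhat i = (n : ℝ) - s)
    (hxyhat : ∀ i, x i * yhat i = 0) :
    {i | y i ≠ yhat i}.ncard ≤ 2 * (s - δ) :=
  stmt_2_general n δ s x y yhat hδ hy hxy hysum hyhat hyhatsum hxyhat
end

section
/- Under the assumptions of the projected-gradient line search (f continuously differentiable with L-Lipschitz gradient, C closed convex, x ∈ C, x̂ = Π_C(x - ∇f(x)), d = x̂ - x), the point x̃ = x + α d produced by Armijo backtracking (parameters γ ∈ (0,1/2), δ ∈ (0,1), initial α = 1) satisfies f(x̃) ≤ f(x) - σ(‖x - Π_C(x - ∇f(x))‖), where σ(t) = γ min{1, (δ/L)(1-γ)} t². -/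
open RealInnerProductSpace

/-- `p` is the metric projection of `v` onto `C`. -/
def IsProjPt {n : ℕ} (C : Set (EuclideanSpace ℝ (Fin n)))
    (v p : EuclideanSpace ℝ (Fin n)) : Prop :=
  p ∈ C ∧ ∀ z ∈ C, ‖v - p‖ ≤ ‖v - z‖

/-- Variational inequality for a projection point. -/
lemma isProjPt_inner_le {n : ℕ} {C : Set (EuclideanSpace ℝ (Fin n))}
    (hconv : Convex ℝ C) {v p : EuclideanSpace ℝ (Fin n)}
    (h : IsProjPt C v p) : ∀ z ∈ C, ⟪v - p, z - p⟫ ≤ 0 := by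
  obtain ⟨hpC, hmin⟩ := h
  have hne : Nonempty C := ⟨⟨p, hpC⟩⟩
  have heq : ‖v - p‖ = ⨅ w : C, ‖v - w‖ := by
    apply le_antisymm
    · exact le_ciInf fun w => hmin w w.2
    · exact ciInf_le ⟨0, fun _ ⟨w, hw⟩ => hw ▸ norm_nonneg _⟩ (⟨p, hpC⟩ : C)
  exact (norm_eq_iInf_iff_real_inner_le_zero hconv hpC).1 heq

/-- Mean-value-type descent bound with Lipschitz gradient. -/
lemma descent_bound {n : ℕ} (f : EuclideanSpace ℝ (Fin n) → ℝ)
    (hf : ContDiff ℝ 1 f) (L : ℝ) (hL : 0 < L)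
    (hlip : ∀ a b, ‖gradient f a - gradient f b‖ ≤ L * ‖a - b‖)
    (x d : EuclideanSpace ℝ (Fin n)) {t : ℝ} (ht : 0 < t) :
    f (x + t • d) ≤ f x + t * ⟪gradient f x, d⟫ + L * t ^ 2 * ‖d‖ ^ 2 := by
  have hdiff : ∀ y, DifferentiableAt ℝ f y := fun y => (hf.differentiable one_ne_zero) y
  set φ : ℝ → ℝ := fun s => f (x + s • d) with hφ
  have hderiv : ∀ s : ℝ, HasDerivAt φ ⟪gradient f (x + s • d), d⟫ s := by
    intro s
    have h1 : HasDerivAt (fun s : ℝ => x + s • d) d s := by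
      simpa using ((hasDerivAt_id s).smul_const d).const_add x
    have h2 := ((hdiff (x + s • d)).hasGradientAt).hasFDerivAt
    have h3 := h2.comp_hasDerivAt s h1
    simp at h3 ⊢; exact h3
  have hcont : ContinuousOn φ (Set.Icc 0 t) :=
    fun s _ => ((hderiv s).continuousAt).continuousWithinAt
  obtain ⟨c, hc, hcval⟩ := exists_hasDerivAt_eq_slope φ
    (fun s => ⟪gradient f (x + s • d), d⟫) ht hcont (fun s _ => hderiv s)
  have hcs : ⟪gradient f (x + c • d) - gradient f x, d⟫ ≤ L * (c * ‖d‖) * ‖d‖ := by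
    calc ⟪gradient f (x + c • d) - gradient f x, d⟫
        ≤ ‖gradient f (x + c • d) - gradient f x‖ * ‖d‖ := real_inner_le_norm _ _
      _ ≤ (L * ‖(x + c • d) - x‖) * ‖d‖ := by
          apply mul_le_mul_of_nonneg_right (hlip _ _) (norm_nonneg _)
      _ = L * (c * ‖d‖) * ‖d‖ := by
          rw [add_sub_cancel_left, norm_smul, Real.norm_eq_abs,
            abs_of_pos hc.1]
  have hsplit : ⟪gradient f (x + c • d), d⟫
      = ⟪gradient f x, d⟫ + ⟪gradient f (x + c • d) - gradient f x, d⟫ := by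
    rw [inner_sub_left]; ring
  rw [sub_zero] at hcval
  have hφ' : (φ t - φ 0) / t ≤ ⟪gradient f x, d⟫ + L * t * ‖d‖ ^ 2 := by
    rw [← hcval, hsplit]
    have : L * (c * ‖d‖) * ‖d‖ ≤ L * t * ‖d‖ ^ 2 := by
      nlinarith [mul_nonneg (mul_nonneg hL.le (sub_nonneg.2 hc.2.le)) (sq_nonneg ‖d‖)]
    linarith
  have h0 : φ 0 = f x := by simp [hφ]
  have ht' : φ t ≤ φ 0 + t * (⟪gradient f x, d⟫ + L * t * ‖d‖ ^ 2) := by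
    have := (div_le_iff₀ ht).1 hφ'
    linarith
  simp only [h0] at ht'
  calc f (x + t • d) = φ t := rfl
    _ ≤ f x + t * (⟪gradient f x, d⟫ + L * t * ‖d‖ ^ 2) := ht'
    _ = f x + t * ⟪gradient f x, d⟫ + L * t ^ 2 * ‖d‖ ^ 2 := by ring

/-- The point produced by Armijo backtracking along `d = Π_C(x-∇f(x)) - x` satisfies
`f(x̃) ≤ f(x) - σ(‖x - Π_C(x-∇f(x))‖)` with `σ(t) = γ min{1, δ(1-γ)/L} t²`. -/
theorem stmt_7 (n : ℕ) (f : EuclideanSpace ℝ (Fin n) → ℝ)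
    (hf : ContDiff ℝ 1 f) (L : ℝ) (hL : 0 < L)
    (hlip : ∀ a b, ‖gradient f a - gradient f b‖ ≤ L * ‖a - b‖)
    (C : Set (EuclideanSpace ℝ (Fin n)))
    (hne : C.Nonempty) (hcl : IsClosed C) (hconv : Convex ℝ C)
    (x : EuclideanSpace ℝ (Fin n)) (hx : x ∈ C)
    (xhat : EuclideanSpace ℝ (Fin n))
    (hproj : IsProjPt C (x - gradient f x) xhat)
    (γ δ : ℝ) (hγ : γ ∈ Set.Ioo (0 : ℝ) (1 / 2)) (hδ : δ ∈ Set.Ioo (0 : ℝ) 1)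
    (k : ℕ)
    (hk : f (x + δ ^ k • (xhat - x)) ≤ f x + γ * δ ^ k * ⟪gradient f x, xhat - x⟫)
    (hkmin : ∀ j < k,
        ¬ (f (x + δ ^ j • (xhat - x)) ≤ f x + γ * δ ^ j * ⟪gradient f x, xhat - x⟫)) :
    f (x + δ ^ k • (xhat - x)) ≤
      f x - γ * min 1 (δ * (1 - γ) / L) * ‖x - xhat‖ ^ 2 := by
  obtain ⟨hγ0, hγ1⟩ := hγ
  obtain ⟨hδ0, hδ1⟩ := hδ
  set g := gradient f x with hg
  set d := xhat - x with hd
  -- projection inequality: ⟪g, d⟫ ≤ -‖d‖²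
  have hvar := isProjPt_inner_le hconv hproj x hx
  have hinner : ⟪g, d⟫ ≤ -‖d‖ ^ 2 := by
    have h1 : ⟪(x - g) - xhat, x - xhat⟫ ≤ 0 := hvar
    have h2 : (x - g) - xhat = -d - g := by rw [hd]; abel
    have h3 : x - xhat = -d := by rw [hd]; abel
    rw [h2, h3, inner_sub_left, inner_neg_neg, inner_neg_right,
      real_inner_self_eq_norm_sq] at h1
    linarith
  have hnd : ‖x - xhat‖ = ‖d‖ := by rw [hd, norm_sub_rev]
  rw [hnd]
  have hmin1 : min 1 (δ * (1 - γ) / L) ≤ 1 := min_le_left _ _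
  have hmin2 : min 1 (δ * (1 - γ) / L) ≤ δ * (1 - γ) / L := min_le_right _ _
  have hnd2 : (0:ℝ) ≤ ‖d‖ ^ 2 := sq_nonneg _
  -- show δ^k ≥ min  (or handle d = 0)
  rcases eq_or_lt_of_le (norm_nonneg d) with hd0 | hd0
  · -- d = 0
    have hdz : d = 0 := by rwa [eq_comm, norm_eq_zero] at hd0
    have : ⟪g, d⟫ = 0 := by rw [hdz, inner_zero_right]
    rw [this, mul_zero] at hk
    have : ‖d‖ ^ 2 = 0 := by rw [hdz]; simp
    rw [this, mul_zero]
    linarith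
  · have hδk : min 1 (δ * (1 - γ) / L) ≤ δ ^ k := by
      cases k with
      | zero => simpa using hmin1
      | succ j =>
        have hfail := hkmin j (Nat.lt_succ_self j)
        push_neg at hfail
        have htpos : (0:ℝ) < δ ^ j := pow_pos hδ0 j
        have hdesc := descent_bound f hf L hL hlip x d htpos
        -- f x + γ δ^j ⟪g,d⟫ < f(x+δ^j d) ≤ f x + δ^j ⟪g,d⟫ + L δ^(2j) ‖d‖²
        have key : γ * δ ^ j * ⟪g, d⟫ < δ ^ j * ⟪g, d⟫ + L * (δ ^ j) ^ 2 * ‖d‖ ^ 2 := by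
          calc γ * δ ^ j * ⟪g, d⟫ < f (x + δ ^ j • d) - f x := by linarith
            _ ≤ δ ^ j * ⟪g, d⟫ + L * (δ ^ j) ^ 2 * ‖d‖ ^ 2 := by linarith
        -- so (1-γ) δ^j (-⟪g,d⟫) < L δ^(2j) ‖d‖², and -⟪g,d⟫ ≥ ‖d‖²
        have hγ1' : (0:ℝ) < 1 - γ := by linarith
        have hApos : (0:ℝ) ≤ -⟪g, d⟫ - ‖d‖ ^ 2 := by linarith
        have hA : δ ^ j * ((1 - γ) * ‖d‖ ^ 2) < δ ^ j * (L * δ ^ j * ‖d‖ ^ 2) := by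
          nlinarith [mul_nonneg (mul_nonneg hγ1'.le htpos.le) hApos]
        have h4 : (1 - γ) * ‖d‖ ^ 2 < L * δ ^ j * ‖d‖ ^ 2 :=
          lt_of_mul_lt_mul_left hA htpos.le
        have h5 : (1 - γ) / L < δ ^ j := by
          rw [div_lt_iff₀ hL]
          nlinarith [sq_pos_of_pos hd0]
        have h6 : δ * (1 - γ) / L ≤ δ ^ (j + 1) := by
          rw [pow_succ, mul_comm (δ ^ j) δ, mul_div_assoc]
          exact mul_le_mul_of_nonneg_left h5.le hδ0.le
        exact le_trans hmin2 h6
    -- conclude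
    have hγmin : 0 ≤ γ * min 1 (δ * (1 - γ) / L) := by
      apply mul_nonneg hγ0.le
      exact le_min zero_le_one (div_nonneg (mul_nonneg hδ0.le (by linarith)) hL.le)
    have : γ * δ ^ k * ⟪g, d⟫ ≤ -(γ * min 1 (δ * (1 - γ) / L) * ‖d‖ ^ 2) := by
      have h7 : γ * δ ^ k * ⟪g, d⟫ ≤ γ * δ ^ k * (-‖d‖ ^ 2) := by
        apply mul_le_mul_of_nonneg_left hinner
        positivity
      have h8 : γ * min 1 (δ * (1 - γ) / L) * ‖d‖ ^ 2 ≤ γ * δ ^ k * ‖d‖ ^ 2 :=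
        mul_le_mul_of_nonneg_right (mul_le_mul_of_nonneg_left hδk hγ0.le) hnd2
      nlinarith
    linarith
end

section
/- Let (x^k, y^k) → (x̄, ȳ) in the sense that y^k = ȳ eventually and x^k → x̄. Fix ρ ∈ ℕ and, for (x̂, ŷ) in the neighborhood N_ρ(x̄, ȳ) = {(x̂,ŷ) : Σŷ ≥ n-s, d_H(ŷ,ȳ) ≤ ρ, x̂ = H_{J(ȳ,ŷ)}(x̄)}, define x̂^k = H_{J(y^k,ŷ)}(x^k) and ŷ^k = ŷ. Then (x̂^k, ŷ^k) ∈ N_ρ(x^k, y^k) for all large k and (x̂^k, ŷ^k) → (x̂, ŷ). -/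
open Filter

/-- Lower semicontinuity of the neighborhood map `N_ρ`: if `(x^k, y^k) → (xbar, ybar)`
(binary part eventually constant) and `(xhat, yhat) ∈ N_ρ(xbar, ybar)`, then the points
`xhat^k = H_{J(y^k, yhat)}(x^k)`, `yhat^k = yhat` belong to `N_ρ(x^k, y^k)` for large `k`
and converge to `(xhat, yhat)`. -/
theorem stmt_12 (n s : ℕ) (hsn : s < n) (ρ : ℕ)
    (xk : ℕ → Fin n → ℝ) (yk : ℕ → Fin n → ℝ)
    (hykbin : ∀ k i, yk k i = 0 ∨ yk k i = 1)
    (xbar : Fin n → ℝ) (ybar : Fin n → ℝ) (hybarbin : ∀ i, ybar i = 0 ∨ ybar i = 1)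
    (hyconv : ∃ K : ℕ, ∀ k ≥ K, yk k = ybar)
    (hxconv : Tendsto xk atTop (nhds xbar))
    (yhat : Fin n → ℝ) (hyhatbin : ∀ i, yhat i = 0 ∨ yhat i = 1)
    (hyhatsum : ((n : ℝ) - s) ≤ ∑ i, yhat i)
    (hyhatham : {i | yhat i ≠ ybar i}.ncard ≤ ρ)
    (xhat : Fin n → ℝ) (hxhat : ∀ i, xhat i = if ybar i ≠ yhat i then 0 else xbar i) :
    (∃ K : ℕ, ∀ k ≥ K, {i | yhat i ≠ yk k i}.ncard ≤ ρ) ∧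
      Tendsto (fun k => fun i => if yk k i ≠ yhat i then 0 else xk k i)
        atTop (nhds xhat) := by
  obtain ⟨K, hK⟩ := hyconv
  constructor
  · exact ⟨K, fun k hk => by rw [hK k hk]; exact hyhatham⟩
  · have hF : Continuous fun x : Fin n → ℝ => fun i => if ybar i ≠ yhat i then (0:ℝ) else x i := by
      apply continuous_pi
      intro i
      by_cases h : ybar i ≠ yhat i <;> simp [h] <;>
        first | exact continuous_const | exact continuous_apply i
    have h1 : Tendsto (fun k => fun i => if ybar i ≠ yhat i then 0 else xk k i)
        atTop (nhds xhat) := by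
      have := hF.continuousAt.tendsto.comp hxconv
      convert this using 2
      · funext i; rfl
      funext i; exact hxhat i
    refine Tendsto.congr' ?_ h1
    filter_upwards [eventually_ge_atTop K] with k hk
    funext i
    rw [hK k hk]
end
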